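/- arXiv:2503.23501 — 3 statements merged into one kernel-verified Lean document; each statement's English description precedes it below -/
import Mathlib

section
/- Let A be a symmetric n×n real matrix with λ_max(A) ≤ C₁, λ_min(A) ≥ 1/C₁, and ‖A⁻¹‖_{∞,1} ≤ C₁ for some constant C₁ ≥ 1, where ‖M‖_{∞,1} = max_i Σ_j |M_{ij}|. For any index k, let B be the principal submatrix of A obtained by deleting row and column k. Then B is invertible and ‖B⁻¹‖_{∞,1} ≤ C for some constant C depending only on C₁ (one may take C = C₁(1 + C₁(C₁ + C₁³))). -/
/-!
Write `M = A⁻¹`. Deleting row and column `k` of `A` inverts to the Schur complement of the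
entry `M k k` in `M`, namely `M_{ij} - M_{ik} M_{kj} / M_{kk}` for `i, j ≠ k`. Its absolute row
sums are at most those of `M` plus `C₁ · C₁ / M_{kk}`, and positive definiteness gives
`M_{kk} ≥ 1 / A_{kk} ≥ 1 / C₁`; hence the bound `C₁ + C₁³`.
-/

open Finset Matrix

namespace Matrix

section Field

variable {K : Type*} [Field K] {n : ℕ}

def schurComplementAt (M : Matrix (Fin (n + 1)) (Fin (n + 1)) K) (k : Fin (n + 1)) :
    Matrix (Fin n) (Fin n) K :=
  of fun i j =>
    M (k.succAbove i) (k.succAbove j) - M (k.succAbove i) k * M k (k.succAbove j) / M k k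

theorem submatrix_succAbove_mul_schurComplementAt {A M : Matrix (Fin (n + 1)) (Fin (n + 1)) K}
    (hAM : A * M = 1) {k : Fin (n + 1)} (hk : M k k ≠ 0) :
    A.submatrix k.succAbove k.succAbove * M.schurComplementAt k = 1 := by
  ext i j
  have row : ∀ q, ∑ l, A (k.succAbove i) (k.succAbove l) * M (k.succAbove l) q
      = (1 : Matrix _ _ K) (k.succAbove i) q - A (k.succAbove i) k * M k q := by
    intro q
    rw [← hAM, mul_apply, Fin.sum_univ_succAbove _ k]
    ring
  calc (A.submatrix k.succAbove k.succAbove * M.schurComplementAt k) i j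
      = ∑ l, A (k.succAbove i) (k.succAbove l) * M (k.succAbove l) (k.succAbove j)
        - (∑ l, A (k.succAbove i) (k.succAbove l) * M (k.succAbove l) k)
          * (M k (k.succAbove j) / M k k) := by
        simp only [mul_apply, submatrix_apply, schurComplementAt, of_apply, sum_mul,
          ← sum_sub_distrib]
        congr! 1 with l
        ring
    _ = (1 : Matrix (Fin n) (Fin n) K) i j := by
        rw [row, row]
        simp only [one_apply, Fin.succAbove_right_injective.eq_iff, Fin.succAbove_ne, if_false]
        field_simp
        ring

end Field

section LinearOrderedField

variable {K : Type*} [Field K] [LinearOrder K] [IsStrictOrderedRing K] {n : ℕ}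

theorem sum_abs_schurComplementAt_le (M : Matrix (Fin (n + 1)) (Fin (n + 1)) K) (k : Fin (n + 1))
    (i : Fin n) :
    ∑ j, |M.schurComplementAt k i j|
      ≤ ∑ q, |M (k.succAbove i) q| + |M (k.succAbove i) k| * (∑ q, |M k q|) / |M k k| := by
  have sum_succAbove_le (f : Fin (n + 1) → K) : ∑ j, |f (k.succAbove j)| ≤ ∑ q, |f q| := by
    rw [Fin.sum_univ_succAbove (fun q => |f q|) k]
    exact le_add_of_nonneg_left (abs_nonneg _)
  calc ∑ j, |M.schurComplementAt k i j|
      ≤ ∑ j, (|M (k.succAbove i) (k.succAbove j)|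
          + |M (k.succAbove i) k| * |M k (k.succAbove j)| / |M k k|) :=
        sum_le_sum fun j _ => by
          rw [schurComplementAt, of_apply, ← abs_mul, ← abs_div]
          exact abs_sub _ _
    _ = ∑ j, |M (k.succAbove i) (k.succAbove j)|
          + |M (k.succAbove i) k| * (∑ j, |M k (k.succAbove j)|) / |M k k| := by
        rw [sum_add_distrib, mul_sum, sum_div]
    _ ≤ _ := by gcongr <;> exact sum_succAbove_le _

end LinearOrderedField

theorem IsSymm.posDef_of_mul_dotProduct_self_le {ι : Type*} [Fintype ι] {A : Matrix ι ι ℝ}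
    (hA : A.IsSymm) {c : ℝ} (hc : 0 < c) (h : ∀ x, c * (x ⬝ᵥ x) ≤ x ⬝ᵥ (A *ᵥ x)) :
    A.PosDef :=
  .of_dotProduct_mulVec_pos hA fun x hx =>
    (mul_pos hc (dotProduct_self_star_pos_iff.mpr hx)).trans_le (h x)

theorem PosDef.inv_le_inv_apply_self {ι : Type*} [Fintype ι] [DecidableEq ι]
    {A : Matrix ι ι ℝ} (hA : A.PosDef) (k : ι) : (A k k)⁻¹ ≤ A⁻¹ k k := by
  set e : ι → ℝ := Pi.single k 1
  set y := A⁻¹ *ᵥ e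
  set t := (A k k)⁻¹
  have hAy : A *ᵥ y = e := by
    rw [mulVec_mulVec, mul_nonsing_inv A ((isUnit_iff_isUnit_det A).mp hA.isUnit), one_mulVec]
  have hyAe : y ⬝ᵥ (A *ᵥ e) = 1 := by
    rw [dotProduct_mulVec, ← mulVec_transpose, ← conjTranspose_eq_transpose_of_trivial,
      hA.isHermitian.eq, hAy]
    simp [e]
  -- the quadratic form at `y - t • e` equals `A⁻¹ k k - 2 t + t² A k k = A⁻¹ k k - t`
  have hquad : 0 ≤ (y - t • e) ⬝ᵥ (A *ᵥ (y - t • e)) :=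
    hA.posSemidef.dotProduct_mulVec_nonneg _
  simp only [mulVec_sub, mulVec_smul, dotProduct_sub, sub_dotProduct, dotProduct_smul,
    smul_dotProduct, hAy, hyAe] at hquad
  simp only [mulVec_single, MulOpposite.op_one, one_smul, dotProduct_single, col_apply, mul_one,
    Pi.single_eq_same, smul_eq_mul, single_dotProduct, one_mul, y, e] at hquad
  rw [inv_mul_cancel₀ hA.diag_pos.ne', sub_self, mul_zero] at hquad
  linarith

end Matrix

/-- Let `A` be a symmetric matrix with `λ_max(A) ≤ C₁`, `λ_min(A) ≥ 1/C₁`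
(phrased via quadratic form bounds), and maximum absolute row sum of `A⁻¹`
at most `C₁`, for some `C₁ ≥ 1`.  Then the principal submatrix `B` obtained
by deleting row and column `k` is invertible, and the maximum absolute row
sum of `B⁻¹` is at most `C = C₁(1 + C₁(C₁ + C₁³))`. -/
theorem stmt_0 {n : ℕ} (A : Matrix (Fin (n + 1)) (Fin (n + 1)) ℝ)
    (C₁ : ℝ) (hC₁ : 1 ≤ C₁) (hSym : A.IsSymm)
    (hmax : ∀ x : Fin (n + 1) → ℝ, x ⬝ᵥ (A *ᵥ x) ≤ C₁ * (x ⬝ᵥ x))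
    (hmin : ∀ x : Fin (n + 1) → ℝ, (1 / C₁) * (x ⬝ᵥ x) ≤ x ⬝ᵥ (A *ᵥ x))
    (hinv : ∀ i, ∑ j, |A⁻¹ i j| ≤ C₁)
    (k : Fin (n + 1))
    (B : Matrix (Fin n) (Fin n) ℝ)
    (hB : B = A.submatrix k.succAbove k.succAbove) :
    IsUnit B.det ∧ ∀ i, ∑ j, |B⁻¹ i j| ≤ C₁ * (1 + C₁ * (C₁ + C₁ ^ 3)) := by
  have hC₁pos : 0 < C₁ := one_pos.trans_le hC₁
  have hA : A.PosDef := hSym.posDef_of_mul_dotProduct_self_le (by positivity) hmin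
  have hAkk : A k k ≤ C₁ := by simpa using hmax (Pi.single k 1)
  have hMkk : C₁⁻¹ ≤ A⁻¹ k k :=
    (inv_anti₀ hA.diag_pos hAkk).trans (hA.inv_le_inv_apply_self k)
  have hMkk_pos : 0 < A⁻¹ k k := (inv_pos.2 hC₁pos).trans_le hMkk
  have hBM : B * A⁻¹.schurComplementAt k = 1 := hB ▸
    submatrix_succAbove_mul_schurComplementAt
      (mul_nonsing_inv A ((isUnit_iff_isUnit_det A).mp hA.isUnit)) hMkk_pos.ne'
  refine ⟨isUnit_det_of_right_inverse hBM, fun i => ?_⟩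
  have hentry : |A⁻¹ (k.succAbove i) k| ≤ C₁ :=
    (single_le_sum (fun q _ => abs_nonneg (A⁻¹ (k.succAbove i) q)) (mem_univ k)).trans (hinv _)
  rw [inv_eq_right_inv hBM]
  calc ∑ j, |A⁻¹.schurComplementAt k i j|
      ≤ ∑ q, |A⁻¹ (k.succAbove i) q|
          + |A⁻¹ (k.succAbove i) k| * (∑ q, |A⁻¹ k q|) / |A⁻¹ k k| :=
        sum_abs_schurComplementAt_le _ k i
    _ ≤ C₁ + C₁ * C₁ / C₁⁻¹ := by
        rw [abs_of_pos hMkk_pos]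
        gcongr
        exacts [hinv _, hinv k]
    _ ≤ C₁ * (1 + C₁ * (C₁ + C₁ ^ 3)) := by
        rw [div_inv_eq_mul]
        nlinarith [pow_pos hC₁pos 5]
end

section
/- Let A ∈ ℝ^{n×n} be symmetric positive definite written in block form A = [[B, b],[bᵀ, a]] with B ∈ ℝ^{(n−1)×(n−1)}, b ∈ ℝ^{n−1}, a ∈ ℝ. Then B is invertible, and ‖B⁻¹b‖_∞ ≤ ‖A⁻¹‖_{∞,1} · (λ_max(A) + λ_max(A)²/λ_min(A)). -/
open Finset Matrix

/-! With `u = B⁻¹ b`, the bordered matrix `A` maps `(u, 0)` to `(b, bᵀu)`, so `u` is the top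
block of `A⁻¹ (b, bᵀu)` and each coordinate of `u` is at most the corresponding absolute row
sum of `A⁻¹` times `‖(b, bᵀu)‖_∞`. Testing the quadratic-form bounds of `A` on `(x, 0)`,
`(0, 1)` and `(b, lmax)` shows that `B` is coercive (hence invertible), that
`lmin ≤ a ≤ lmax` and that `‖b‖₂ ≤ lmax`; coercivity of `B` together with Cauchy–Schwarz
gives `0 ≤ bᵀu ≤ ‖b‖₂² / lmin`. -/

theorem isUnit_det_of_dotProduct_mulVec_pos {R n : Type*} [Field R] [PartialOrder R] [Fintype n]
    [DecidableEq n] {M : Matrix n n R}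
    (hM : ∀ x ≠ 0, 0 < x ⬝ᵥ (M *ᵥ x)) : IsUnit M.det := by
  refine isUnit_iff_ne_zero.mpr fun hdet => ?_
  obtain ⟨v, hv, hMv⟩ := exists_mulVec_eq_zero_iff.mpr hdet
  simpa [hMv] using hM v hv

theorem dotProduct_self_nonneg {R n : Type*} [Ring R] [LinearOrder R] [IsStrictOrderedRing R]
    [Fintype n] (v : n → R) : 0 ≤ v ⬝ᵥ v :=
  Fintype.sum_nonneg fun i => mul_self_nonneg (v i)

theorem dotProduct_self_pos {R n : Type*} [Ring R] [LinearOrder R] [IsStrictOrderedRing R]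
    [Fintype n] {v : n → R} (hv : v ≠ 0) : 0 < v ⬝ᵥ v :=
  (dotProduct_self_nonneg v).lt_of_ne' (dotProduct_self_eq_zero.not.mpr hv)

theorem sq_le_dotProduct_self {R n : Type*} [Ring R] [LinearOrder R] [IsStrictOrderedRing R]
    [Fintype n] (v : n → R) (i : n) : v i ^ 2 ≤ v ⬝ᵥ v := by
  rw [sq]
  exact single_le_sum (fun j _ => mul_self_nonneg (v j)) (mem_univ i)

section Coercive

variable {𝕜 n : Type*} [Field 𝕜] [LinearOrder 𝕜] [IsStrictOrderedRing 𝕜] [Fintype n]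
  {M : Matrix n n 𝕜} {c : 𝕜}

theorem isUnit_det_of_coercive [DecidableEq n] (hc : 0 < c)
    (hM : ∀ x, c * (x ⬝ᵥ x) ≤ x ⬝ᵥ (M *ᵥ x)) : IsUnit M.det :=
  isUnit_det_of_dotProduct_mulVec_pos fun x hx =>
    (mul_pos hc (dotProduct_self_pos hx)).trans_le (hM x)

theorem dotProduct_le_div_of_coercive (hc : 0 < c) (hM : ∀ x, c * (x ⬝ᵥ x) ≤ x ⬝ᵥ (M *ᵥ x))
    {u b : n → 𝕜} (hu : M *ᵥ u = b) : 0 ≤ b ⬝ᵥ u ∧ b ⬝ᵥ u ≤ (b ⬝ᵥ b) / c := by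
  have hlow : c * (u ⬝ᵥ u) ≤ b ⬝ᵥ u := by
    simpa [hu, dotProduct_comm u b] using hM u
  have hnonneg : 0 ≤ b ⬝ᵥ u := (mul_nonneg hc.le (dotProduct_self_nonneg u)).trans hlow
  have hCS : (b ⬝ᵥ u) ^ 2 ≤ (b ⬝ᵥ b) * (u ⬝ᵥ u) := by
    simpa [dotProduct, sq] using sum_mul_sq_le_sq_mul_sq univ b u
  refine ⟨hnonneg, (le_div_iff₀ hc).mpr ?_⟩
  nlinarith [mul_le_mul_of_nonneg_left hlow (dotProduct_self_nonneg b),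
    mul_le_mul_of_nonneg_left hCS hc.le, dotProduct_self_nonneg b]

end Coercive

theorem abs_mulVec_apply_le {𝕜 m n : Type*} [Field 𝕜] [LinearOrder 𝕜] [IsStrictOrderedRing 𝕜]
    [Fintype n] (M : Matrix m n 𝕜) {v : n → 𝕜} {C : 𝕜} (hv : ∀ j, |v j| ≤ C) (i : m) :
    |(M *ᵥ v) i| ≤ (∑ j, |M i j|) * C :=
  calc |(M *ᵥ v) i| ≤ ∑ j, |M i j * v j| := abs_sum_le_sum_abs _ _
    _ ≤ ∑ j, |M i j| * C := by
        gcongr with j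
        rw [abs_mul]
        exact mul_le_mul_of_nonneg_left (hv j) (abs_nonneg _)
    _ = (∑ j, |M i j|) * C := (sum_mul ..).symm

section Bordered

variable {R n : Type*} [Fintype n]

abbrev borderedMatrix [Zero R] (B : Matrix n n R) (b : n → R) (a : R) :
    Matrix (n ⊕ Unit) (n ⊕ Unit) R :=
  fromBlocks B (of fun i (_ : Unit) => b i) (of fun (_ : Unit) j => b j) (of fun _ _ => a)

variable [CommRing R] (B : Matrix n n R) (b : n → R) (a : R)

theorem borderedMatrix_mulVec_sumElim (x : n → R) (t : R) :
    borderedMatrix B b a *ᵥ Sum.elim x (fun _ => t) =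
      Sum.elim (B *ᵥ x + t • b) (fun _ => b ⬝ᵥ x + a * t) := by
  rw [fromBlocks_mulVec]
  ext (i | _) <;> simp [mulVec, dotProduct, mul_comm]

theorem sumElim_dotProduct_borderedMatrix_mulVec_sumElim (x : n → R) (t : R) :
    Sum.elim x (fun _ => t) ⬝ᵥ (borderedMatrix B b a *ᵥ Sum.elim x (fun _ => t)) =
      x ⬝ᵥ (B *ᵥ x) + 2 * t * (b ⬝ᵥ x) + t ^ 2 * a := by
  rw [borderedMatrix_mulVec_sumElim, sumElim_dotProduct_sumElim, dotProduct_add,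
    dotProduct_smul, dotProduct_comm x b]
  simp only [dotProduct, smul_eq_mul, univ_unique, PUnit.default_eq_unit, sum_const,
    card_singleton, one_smul]
  ring

theorem sumElim_dotProduct_self (x : n → R) (t : R) :
    Sum.elim x (fun _ : Unit => t) ⬝ᵥ Sum.elim x (fun _ => t) = x ⬝ᵥ x + t ^ 2 := by
  simp [dotProduct, sq]

variable {B b a} {lmin lmax : R}

theorem coercive_of_borderedMatrix [LE R]
    (hmin : ∀ x, lmin * (x ⬝ᵥ x) ≤ x ⬝ᵥ (borderedMatrix B b a *ᵥ x)) (x : n → R) :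
    lmin * (x ⬝ᵥ x) ≤ x ⬝ᵥ (B *ᵥ x) := by
  simpa [sumElim_dotProduct_self, sumElim_dotProduct_borderedMatrix_mulVec_sumElim]
    using hmin (Sum.elim x fun _ => 0)

theorem le_corner_of_borderedMatrix [LE R]
    (hmin : ∀ x, lmin * (x ⬝ᵥ x) ≤ x ⬝ᵥ (borderedMatrix B b a *ᵥ x)) : lmin ≤ a := by
  simpa [sumElim_dotProduct_self, sumElim_dotProduct_borderedMatrix_mulVec_sumElim]
    using hmin (Sum.elim 0 fun _ => 1)

theorem corner_le_of_borderedMatrix [LE R]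
    (hmax : ∀ x, x ⬝ᵥ (borderedMatrix B b a *ᵥ x) ≤ lmax * (x ⬝ᵥ x)) : a ≤ lmax := by
  simpa [sumElim_dotProduct_self, sumElim_dotProduct_borderedMatrix_mulVec_sumElim]
    using hmax (Sum.elim 0 fun _ => 1)

theorem pos_of_borderedMatrix [Preorder R] (hlmin : 0 < lmin)
    (hmin : ∀ x, lmin * (x ⬝ᵥ x) ≤ x ⬝ᵥ (borderedMatrix B b a *ᵥ x))
    (hmax : ∀ x, x ⬝ᵥ (borderedMatrix B b a *ᵥ x) ≤ lmax * (x ⬝ᵥ x)) : 0 < lmax :=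
  hlmin.trans_le ((le_corner_of_borderedMatrix hmin).trans (corner_le_of_borderedMatrix hmax))

end Bordered

section BorderedBounds

variable {𝕜 n : Type*} [Field 𝕜] [LinearOrder 𝕜] [IsStrictOrderedRing 𝕜] [Fintype n]
  {B : Matrix n n 𝕜} {b : n → 𝕜} {a lmin lmax : 𝕜}

theorem dotProduct_self_le_sq_of_borderedMatrix (hlmin : 0 < lmin)
    (hmin : ∀ x, lmin * (x ⬝ᵥ x) ≤ x ⬝ᵥ (borderedMatrix B b a *ᵥ x))
    (hmax : ∀ x, x ⬝ᵥ (borderedMatrix B b a *ᵥ x) ≤ lmax * (x ⬝ᵥ x)) : b ⬝ᵥ b ≤ lmax ^ 2 := by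
  have htest := hmax (Sum.elim b fun _ => lmax)
  rw [sumElim_dotProduct_self, sumElim_dotProduct_borderedMatrix_mulVec_sumElim] at htest
  have hlmax := pos_of_borderedMatrix hlmin hmin hmax
  have ha := hlmin.trans_le (le_corner_of_borderedMatrix hmin)
  have hBb := (mul_nonneg hlmin.le (dotProduct_self_nonneg b)).trans
    (coercive_of_borderedMatrix hmin b)
  nlinarith [mul_pos (pow_pos hlmax 2) ha]

theorem abs_borderedMatrix_mulVec_sumElim_le (hlmin : 0 < lmin)
    (hmin : ∀ x, lmin * (x ⬝ᵥ x) ≤ x ⬝ᵥ (borderedMatrix B b a *ᵥ x))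
    (hmax : ∀ x, x ⬝ᵥ (borderedMatrix B b a *ᵥ x) ≤ lmax * (x ⬝ᵥ x))
    {u : n → 𝕜} (hu : B *ᵥ u = b) (j : n ⊕ Unit) :
    |(borderedMatrix B b a *ᵥ Sum.elim u fun _ => 0) j| ≤ lmax + lmax ^ 2 / lmin := by
  have hlmax := pos_of_borderedMatrix hlmin hmin hmax
  have hbb := dotProduct_self_le_sq_of_borderedMatrix hlmin hmin hmax
  have hquot : 0 ≤ lmax ^ 2 / lmin := by positivity
  rw [borderedMatrix_mulVec_sumElim, hu]
  rcases j with j | _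
  · have hbj : |b j| ≤ lmax :=
      abs_le_of_sq_le_sq ((sq_le_dotProduct_self b j).trans hbb) hlmax.le
    simpa using hbj.trans (le_add_of_nonneg_right hquot)
  · obtain ⟨hnonneg, hle⟩ :=
      dotProduct_le_div_of_coercive hlmin (coercive_of_borderedMatrix hmin) hu
    have hS : b ⬝ᵥ u ≤ lmax ^ 2 / lmin :=
      hle.trans (div_le_div_of_nonneg_right hbb hlmin.le)
    simpa [abs_of_nonneg hnonneg] using hS.trans (le_add_of_nonneg_left hlmax.le)

end BorderedBounds

theorem stmt_10_general {m : ℕ} (B : Matrix (Fin m) (Fin m) ℝ) (b : Fin m → ℝ)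
    (a : ℝ) (A : Matrix (Fin m ⊕ Unit) (Fin m ⊕ Unit) ℝ)
    (hA : A = Matrix.fromBlocks B (Matrix.of fun i (_ : Unit) => b i)
      (Matrix.of fun (_ : Unit) j => b j) (Matrix.of fun _ _ => a))
    (lmin lmax cinf : ℝ) (hlmin : 0 < lmin)
    (hmin : ∀ x : Fin m ⊕ Unit → ℝ, lmin * (x ⬝ᵥ x) ≤ x ⬝ᵥ (A *ᵥ x))
    (hmax : ∀ x : Fin m ⊕ Unit → ℝ, x ⬝ᵥ (A *ᵥ x) ≤ lmax * (x ⬝ᵥ x))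
    (hinf : ∀ i, ∑ j, |A⁻¹ i j| ≤ cinf) :
    IsUnit B.det ∧
    ∀ i, |(B⁻¹ *ᵥ b) i| ≤ cinf * (lmax + lmax ^ 2 / lmin) := by
  change A = borderedMatrix B b a at hA
  subst hA
  have hB : IsUnit B.det := isUnit_det_of_coercive hlmin (coercive_of_borderedMatrix hmin)
  refine ⟨hB, fun i => ?_⟩
  have hu : B *ᵥ (B⁻¹ *ᵥ b) = b := by rw [mulVec_mulVec, mul_nonsing_inv B hB, one_mulVec]
  set y := borderedMatrix B b a *ᵥ Sum.elim (B⁻¹ *ᵥ b) fun _ => 0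
  have hy : (borderedMatrix B b a)⁻¹ *ᵥ y = Sum.elim (B⁻¹ *ᵥ b) fun _ => 0 := by
    rw [mulVec_mulVec, nonsing_inv_mul _ (isUnit_det_of_coercive hlmin hmin), one_mulVec]
  have hC : 0 ≤ lmax + lmax ^ 2 / lmin :=
    add_nonneg (pos_of_borderedMatrix hlmin hmin hmax).le (by positivity)
  calc |(B⁻¹ *ᵥ b) i| = |((borderedMatrix B b a)⁻¹ *ᵥ y) (Sum.inl i)| := by rw [hy]; rfl
    _ ≤ (∑ j, |(borderedMatrix B b a)⁻¹ (Sum.inl i) j|) * (lmax + lmax ^ 2 / lmin) :=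
        abs_mulVec_apply_le _ (abs_borderedMatrix_mulVec_sumElim_le hlmin hmin hmax hu) _
    _ ≤ cinf * (lmax + lmax ^ 2 / lmin) := mul_le_mul_of_nonneg_right (hinf _) hC

/-- Let `A = [[B, b],[bᵀ, a]]` be symmetric positive definite with
quadratic-form bounds `lmin‖x‖² ≤ xᵀAx ≤ lmax‖x‖²` and maximum absolute row
sum of `A⁻¹` at most `cinf`.  Then `B` is invertible and
`‖B⁻¹b‖_∞ ≤ cinf (lmax + lmax²/lmin)`. -/
theorem stmt_10 {m : ℕ} (B : Matrix (Fin m) (Fin m) ℝ) (b : Fin m → ℝ)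
    (a : ℝ) (A : Matrix (Fin m ⊕ Unit) (Fin m ⊕ Unit) ℝ)
    (hA : A = Matrix.fromBlocks B (Matrix.of fun i (_ : Unit) => b i)
      (Matrix.of fun (_ : Unit) j => b j) (Matrix.of fun _ _ => a))
    (hPD : A.PosDef) (lmin lmax cinf : ℝ) (hlmin : 0 < lmin)
    (hmin : ∀ x : Fin m ⊕ Unit → ℝ, lmin * (x ⬝ᵥ x) ≤ x ⬝ᵥ (A *ᵥ x))
    (hmax : ∀ x : Fin m ⊕ Unit → ℝ, x ⬝ᵥ (A *ᵥ x) ≤ lmax * (x ⬝ᵥ x))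
    (hinf : ∀ i, ∑ j, |A⁻¹ i j| ≤ cinf) :
    IsUnit B.det ∧
    ∀ i, |(B⁻¹ *ᵥ b) i| ≤ cinf * (lmax + lmax ^ 2 / lmin) :=
  stmt_10_general B b a A hA lmin lmax cinf hlmin hmin hmax hinf
end

section
/- Let C ∈ ℝ^{N×p} satisfy λ_max(C_SᵀC_S) ≤ KN for all S with |S| ≤ s+1, and let R = C_j − Cφ where φ is supported on S₀ ⊂ [p]∖{j}, |S₀| ≤ s, ‖φ‖₂ ≤ M, and ‖C_{−j}ᵀR‖_∞ ≤ ρ. Then ‖R‖₂² ≤ √(KN)·‖R‖₂ + ρ√s·M, and hence ‖R‖₂ ≤ √(KN) + √(ρ√s·M). -/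
open Finset Matrix

/-- Upper bound on the residual `R = C_j − Cφ`: if
`λ_max(C_SᵀC_S) ≤ KN` for all `|S| ≤ s + 1` (via quadratic forms of sparse
vectors), `φ` is supported on `S₀` with `|S₀| ≤ s` and `‖φ‖₂ ≤ M`, and
`‖C_{−j}ᵀR‖_∞ ≤ ρ`, then `‖R‖₂² ≤ √(KN)‖R‖₂ + ρ√s·M` and hence
`‖R‖₂ ≤ √(KN) + √(ρ√s·M)`. -/
theorem stmt_14 {N p : ℕ} (hN : 0 < N) (C : Matrix (Fin N) (Fin p) ℝ)
    (j : Fin p) (S0 : Finset (Fin p)) (hjS : j ∉ S0) (s : ℕ)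
    (hcard : S0.card ≤ s) (K ρ M : ℝ) (hK : 0 ≤ K) (hρ : 0 ≤ ρ) (hM : 0 ≤ M)
    (heig : ∀ S : Finset (Fin p), S.card ≤ s + 1 → ∀ v : Fin p → ℝ,
      (∀ l ∉ S, v l = 0) →
      (C *ᵥ v) ⬝ᵥ (C *ᵥ v) ≤ K * N * (∑ l, (v l) ^ 2))
    (φ : Fin p → ℝ) (hsupp : ∀ l ∉ S0, φ l = 0)
    (hφM : Real.sqrt (∑ l, (φ l) ^ 2) ≤ M)
    (R : Fin N → ℝ) (hR : R = (fun i => C i j) - C *ᵥ φ)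
    (hRinf : ∀ l : Fin p, l ≠ j → |(fun i => C i l) ⬝ᵥ R| ≤ ρ) :
    (∑ i, (R i) ^ 2)
        ≤ Real.sqrt (K * N) * Real.sqrt (∑ i, (R i) ^ 2)
          + ρ * Real.sqrt s * M ∧
    Real.sqrt (∑ i, (R i) ^ 2)
        ≤ Real.sqrt (K * N) + Real.sqrt (ρ * Real.sqrt s * M) := by
  set x := Real.sqrt (∑ i, (R i) ^ 2) with hx
  have hRsq : 0 ≤ ∑ i, (R i) ^ 2 := Finset.sum_nonneg fun i _ => sq_nonneg _
  have hx0 : 0 ≤ x := Real.sqrt_nonneg _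
  have hxsq : x ^ 2 = ∑ i, (R i) ^ 2 := Real.sq_sqrt hRsq
  -- column j squared norm bound
  have hCj : (∑ i, (C i j) ^ 2) ≤ K * N := by
    have := heig {j} (by simp) (Pi.single j 1) (by
      intro l hl
      simp only [Finset.mem_singleton] at hl
      simp [Pi.single_eq_of_ne hl])
    simpa [mulVec, dotProduct, Pi.single_apply, mul_comm, sq] using this
  have hCjsqrt : Real.sqrt (∑ i, (C i j) ^ 2) ≤ Real.sqrt (K * N) :=
    Real.sqrt_le_sqrt hCj
  -- split dot product
  have hsplit : ∑ i, (R i) ^ 2 = (∑ i, R i * C i j) - (∑ l, φ l * ∑ i, C i l * R i) := by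
    have : ∑ i, (R i) ^ 2 = ∑ i, R i * ((fun i => C i j) - C *ᵥ φ) i := by
      rw [← hR]; exact Finset.sum_congr rfl fun i _ => by ring
    rw [this]
    simp only [Pi.sub_apply, mulVec, dotProduct, mul_sub, Finset.sum_sub_distrib]
    congr 1
    calc ∑ i : Fin N, R i * ∑ l, C i l * φ l
        = ∑ i : Fin N, ∑ l, R i * (C i l * φ l) := by
          exact Finset.sum_congr rfl fun i _ => Finset.mul_sum _ _ _
      _ = ∑ l, ∑ i : Fin N, R i * (C i l * φ l) := Finset.sum_comm
      _ = ∑ l, φ l * ∑ i, C i l * R i := by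
          refine Finset.sum_congr rfl fun l _ => ?_
          rw [Finset.mul_sum]
          exact Finset.sum_congr rfl fun i _ => by ring
  -- bound 1 via Cauchy-Schwarz
  have hb1 : (∑ i, R i * C i j) ≤ Real.sqrt (K * N) * x := by
    have h2 : (∑ i, R i * C i j) ^ 2 ≤ (∑ i, (R i) ^ 2) * (∑ i, (C i j) ^ 2) :=
      Finset.sum_mul_sq_le_sq_mul_sq Finset.univ _ _
    calc (∑ i, R i * C i j) ≤ |∑ i, R i * C i j| := le_abs_self _
      _ = Real.sqrt ((∑ i, R i * C i j) ^ 2) := (Real.sqrt_sq_eq_abs _).symm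
      _ ≤ Real.sqrt ((∑ i, (R i) ^ 2) * (∑ i, (C i j) ^ 2)) := Real.sqrt_le_sqrt h2
      _ = x * Real.sqrt (∑ i, (C i j) ^ 2) := by rw [Real.sqrt_mul hRsq]
      _ ≤ x * Real.sqrt (K * N) := by
          exact mul_le_mul_of_nonneg_left hCjsqrt hx0
      _ = Real.sqrt (K * N) * x := mul_comm _ _
  -- bound 2
  have hb2 : -(∑ l, φ l * ∑ i, C i l * R i) ≤ ρ * Real.sqrt s * M := by
    have habs : |∑ l, φ l * ∑ i, C i l * R i| ≤ ρ * (∑ l ∈ S0, |φ l|) := by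
      calc |∑ l, φ l * ∑ i, C i l * R i|
          = |∑ l ∈ S0, φ l * ∑ i, C i l * R i| := by
            congr 1
            rw [← Finset.sum_subset (Finset.subset_univ S0)]
            intro l _ hl
            simp [hsupp l hl]
        _ ≤ ∑ l ∈ S0, |φ l * ∑ i, C i l * R i| := Finset.abs_sum_le_sum_abs _ _
        _ ≤ ∑ l ∈ S0, |φ l| * ρ := by
            apply Finset.sum_le_sum
            intro l hl
            rw [abs_mul]
            exact mul_le_mul_of_nonneg_left
              (hRinf l (fun h => hjS (h ▸ hl))) (abs_nonneg _)
        _ = ρ * (∑ l ∈ S0, |φ l|) := by rw [Finset.mul_sum]; exact Finset.sum_congr rfl fun _ _ => mul_comm _ _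
    have hℓ1 : (∑ l ∈ S0, |φ l|) ≤ Real.sqrt s * M := by
      have h2 : (∑ l ∈ S0, |φ l| * 1) ^ 2 ≤ (∑ l ∈ S0, |φ l| ^ 2) * (∑ l ∈ S0, (1:ℝ) ^ 2) :=
        Finset.sum_mul_sq_le_sq_mul_sq S0 _ _
      have hsub : (∑ l ∈ S0, |φ l| ^ 2) ≤ ∑ l, (φ l) ^ 2 := by
        calc (∑ l ∈ S0, |φ l| ^ 2) = ∑ l ∈ S0, (φ l) ^ 2 := by
              exact Finset.sum_congr rfl fun l _ => sq_abs _
          _ ≤ ∑ l, (φ l) ^ 2 :=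
              Finset.sum_le_sum_of_subset_of_nonneg (Finset.subset_univ S0)
                (fun l _ _ => sq_nonneg _)
      calc (∑ l ∈ S0, |φ l|) = Real.sqrt ((∑ l ∈ S0, |φ l|) ^ 2) := by
            rw [Real.sqrt_sq (Finset.sum_nonneg fun _ _ => abs_nonneg _)]
        _ ≤ Real.sqrt ((∑ l, (φ l) ^ 2) * s) := by
            apply Real.sqrt_le_sqrt
            simp only [mul_one, one_pow, Finset.sum_const, nsmul_eq_mul] at h2 ⊢
            calc (∑ l ∈ S0, |φ l|) ^ 2 ≤ (∑ l ∈ S0, |φ l| ^ 2) * S0.card := h2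
              _ ≤ (∑ l, (φ l) ^ 2) * s := by
                  apply mul_le_mul hsub (by exact_mod_cast hcard)
                    (by positivity)
                    (Finset.sum_nonneg fun _ _ => sq_nonneg _)
        _ = Real.sqrt (∑ l, (φ l) ^ 2) * Real.sqrt s :=
            Real.sqrt_mul (Finset.sum_nonneg fun _ _ => sq_nonneg _) _
        _ ≤ M * Real.sqrt s := mul_le_mul_of_nonneg_right hφM (Real.sqrt_nonneg _)
        _ = Real.sqrt s * M := mul_comm _ _
    calc -(∑ l, φ l * ∑ i, C i l * R i) ≤ |∑ l, φ l * ∑ i, C i l * R i| := neg_le_abs _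
      _ ≤ ρ * (∑ l ∈ S0, |φ l|) := habs
      _ ≤ ρ * (Real.sqrt s * M) := mul_le_mul_of_nonneg_left hℓ1 hρ
      _ = ρ * Real.sqrt s * M := by ring
  have hmain : (∑ i, (R i) ^ 2) ≤ Real.sqrt (K * N) * x + ρ * Real.sqrt s * M := by
    rw [hsplit]; linarith
  refine ⟨hmain, ?_⟩
  -- quadratic inequality
  have hb : 0 ≤ ρ * Real.sqrt s * M := by positivity
  have hsb : Real.sqrt (ρ * Real.sqrt s * M) ^ 2 = ρ * Real.sqrt s * M := Real.sq_sqrt hb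
  have ha : 0 ≤ Real.sqrt (K * N) := Real.sqrt_nonneg _
  nlinarith [Real.sqrt_nonneg (ρ * Real.sqrt s * M), hxsq, sq_nonneg (x - Real.sqrt (K*N) - Real.sqrt (ρ * Real.sqrt s * M))]
end
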